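/- Define, for (x,y,t) with t > 0, ψ_E(x,y,t) = ∫₀ᵗ ψ₀(x−s, y, t−s) ds where ψ₀(x,y,t) = (1/π)(t²−2x²−2y²)^{−1/2} for x²+y² < t²/2 and 0 otherwise. Then ψ_E is self-similar, i.e., ψ_E(x,y,t) = ψ_E(x/t, y/t, 1) for all t > 0, and for points (x,y) in the square ◇ = {|x|+|y|<1} outside the closed disc of radius √2/2: ψ_E(x,y,1) = 1 if x > 1/2 and ψ_E(x,y,1) = 0 if x < 1/2. -/

import Mathlib

/-!
Scaling `(x, y, t) ↦ (λx, λy, λt)` divides `ψ₀` by `λ`, so the substitution `s = λu` makes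
`ψ_E` invariant. At `t = 1` the radicand `(1 - s)² - 2(x - s)² - 2y²` equals `r² - (s - c)²`
with `c = 2x - 1` and `r² = 2((1 - x)² - y²)`: the integrand is the arcsine density of
`[c - r, c + r]`, with antiderivative `arcsin ((s - c) / r) / π`. For `x > 1/2` in the frozen
region this interval is nondegenerate and lies in `[0, 1]`, so `ψ_E = 1`; for `x < 1/2` the
radicand is negative on all of `[0, 1]`.
-/

/-- `ψ₀(x,y,t) = (1/π)(t²−2x²−2y²)^{-1/2}` inside the light cone `x²+y² < t²/2`,
and `0` outside. -/
noncomputable def psi0 (x y t : ℝ) : ℝ :=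
  if x ^ 2 + y ^ 2 < t ^ 2 / 2 then 1 / (Real.pi * Real.sqrt (t ^ 2 - 2 * x ^ 2 - 2 * y ^ 2))
  else 0

/-- `ψ_E(x,y,t) = ∫₀ᵗ ψ₀(x−s,y,t−s) ds`: the solution of the wave equation with a
constant super-sonic source moving east with speed `1`. -/
noncomputable def psiE (x y t : ℝ) : ℝ := ∫ s in (0:ℝ)..t, psi0 (x - s) y (t - s)

open MeasureTheory Real Set

/-- Outside `[c - r, c + r]` the square root vanishes, so `1 / 0 = 0` makes the density `0`. -/
noncomputable def arcsineDensity (c r s : ℝ) : ℝ := 1 / (π * √(r ^ 2 - (s - c) ^ 2))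

theorem arcsineDensity_eq_zero_of_notMem {c r s : ℝ} (hr : 0 ≤ r)
    (hs : s ∉ Ioo (c - r) (c + r)) :
    arcsineDensity c r s = 0 := by
  have : r ^ 2 - (s - c) ^ 2 ≤ 0 := by
    simp only [mem_Ioo, not_and_or, not_lt] at hs
    rcases hs with hs | hs <;> nlinarith
  simp [arcsineDensity, sqrt_eq_zero'.2 this]

theorem arcsineDensity_nonneg (c r s : ℝ) : 0 ≤ arcsineDensity c r s := by
  unfold arcsineDensity; positivity

theorem hasDerivAt_arcsin_div {c r s : ℝ} (hr : 0 < r) (hs₁ : s ≠ c - r)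
    (hs₂ : s ≠ c + r) :
    HasDerivAt (fun s => arcsin ((s - c) / r) / π) (arcsineDensity c r s) s := by
  have h₁ : (s - c) / r ≠ -1 := by
    rw [Ne, div_eq_iff hr.ne']; contrapose! hs₁; linarith
  have h₂ : (s - c) / r ≠ 1 := by
    rw [Ne, div_eq_iff hr.ne']; contrapose! hs₂; linarith
  have hinner : HasDerivAt (fun s => (s - c) / r) (1 / r) s := by
    simpa using ((hasDerivAt_id s).sub_const c).div_const r
  refine (((hasDerivAt_arcsin h₁ h₂).comp s hinner).div_const π).congr_deriv ?_
  have hsq : r ^ 2 - (s - c) ^ 2 = r ^ 2 * (1 - ((s - c) / r) ^ 2) := by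
    field_simp
  rw [arcsineDensity, hsq, sqrt_mul (sq_nonneg r), sqrt_sq hr.le]
  field_simp

theorem continuous_arcsin_div (c r : ℝ) : Continuous fun s => arcsin ((s - c) / r) / π :=
  (continuous_arcsin.comp (by fun_prop)).div_const π

theorem integrable_arcsineDensity (c : ℝ) {r : ℝ} (hr : 0 < r) :
    Integrable (arcsineDensity c r) := by
  have hsupp : (Ioc (c - r) (c + r)).indicator (arcsineDensity c r) = arcsineDensity c r :=
    indicator_eq_self.2 fun s hs =>
      Ioo_subset_Ioc_self (by_contra fun h => hs (arcsineDensity_eq_zero_of_notMem hr.le h))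
  rw [← hsupp, integrable_indicator_iff measurableSet_Ioc]
  exact intervalIntegral.integrableOn_deriv_of_nonneg (continuous_arcsin_div c r).continuousOn
    (fun s hs => hasDerivAt_arcsin_div hr hs.1.ne' hs.2.ne) fun s _ => arcsineDensity_nonneg c r s

theorem integral_arcsineDensity {c r p q : ℝ} (hr : 0 < r) (hp : p ≤ c - r) (hq : c + r ≤ q) :
    ∫ s in p..q, arcsineDensity c r s = 1 := by
  rw [integral_eq_of_hasDerivAt_off_countable_of_le _ _ (by linarith)
    ((countable_singleton (c - r)).insert (c + r)) (continuous_arcsin_div c r).continuousOn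
    (fun s hs => hasDerivAt_arcsin_div hr (fun h => hs.2 (by simp [h]))
      (fun h => hs.2 (by simp [h])))
    ((integrable_arcsineDensity c hr).intervalIntegrable)]
  rw [arcsin_of_one_le ((one_le_div hr).2 (by linarith)),
    arcsin_of_le_neg_one ((div_le_iff₀ hr).2 (by linarith))]
  field_simp
  ring

/-- The `if` in `psi0` is redundant: outside the cone `√` of the negative radicand is `0`. -/
theorem psi0_eq (x y t : ℝ) : psi0 x y t = 1 / (π * √(t ^ 2 - 2 * x ^ 2 - 2 * y ^ 2)) := by
  rw [psi0, ite_eq_left_iff, not_lt]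
  intro h
  rw [sqrt_eq_zero'.2 (by linarith), mul_zero, div_zero]

theorem psi0_mul (t x y T : ℝ) : psi0 (t * x) (t * y) (t * T) = psi0 x y T / |t| := by
  have h : (t * T) ^ 2 - 2 * (t * x) ^ 2 - 2 * (t * y) ^ 2
      = t ^ 2 * (T ^ 2 - 2 * x ^ 2 - 2 * y ^ 2) := by ring
  rw [psi0_eq, psi0_eq, h, sqrt_mul (sq_nonneg t), sqrt_sq_eq_abs, div_div]
  ring

theorem psiE_mul {t : ℝ} (ht : 0 < t) (x y T : ℝ) :
    psiE (t * x) (t * y) (t * T) = psiE x y T := by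
  have hu : ∀ u, psi0 (t * x - t * u) (t * y) (t * T - t * u) = psi0 (x - u) y (T - u) / t := by
    intro u
    rw [← mul_sub, ← mul_sub, psi0_mul, abs_of_pos ht]
  have hsub := intervalIntegral.smul_integral_comp_mul_left (a := 0) (b := T)
    (fun s => psi0 (t * x - s) (t * y) (t * T - s)) t
  rw [mul_zero] at hsub
  rw [psiE, psiE, ← hsub, smul_eq_mul]
  simp only [hu, intervalIntegral.integral_div]
  field_simp

theorem psi0_sub_sub_one {x y r : ℝ} (hr : r ^ 2 = 2 * ((1 - x) ^ 2 - y ^ 2)) (s : ℝ) :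
    psi0 (x - s) y (1 - s) = arcsineDensity (2 * x - 1) r s := by
  rw [psi0_eq, arcsineDensity, hr]
  ring_nf

theorem psiE_eq_one {x y : ℝ} (hx : 1 / 2 ≤ x) (hy : |y| < 1 - x)
    (hxy : 1 / 2 ≤ x ^ 2 + y ^ 2) :
    psiE x y 1 = 1 := by
  have hD : 0 < 2 * ((1 - x) ^ 2 - y ^ 2) := by
    nlinarith [sq_abs y, abs_nonneg y]
  set r := √(2 * ((1 - x) ^ 2 - y ^ 2))
  have hr : 0 < r := sqrt_pos.2 hD
  have hr2 : r ^ 2 = 2 * ((1 - x) ^ 2 - y ^ 2) := sq_sqrt hD.le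
  have hrc : r ≤ 2 * x - 1 := by nlinarith
  have hr1 : r ≤ 2 * (1 - x) := by nlinarith [abs_nonneg y]
  rw [psiE, intervalIntegral.integral_congr fun s _ => psi0_sub_sub_one hr2 s]
  exact integral_arcsineDensity hr (by linarith) (by linarith)

theorem psiE_eq_zero {x y : ℝ} (hx : x ≤ 1 / 2) (hxy : 1 / 2 ≤ x ^ 2 + y ^ 2) :
    psiE x y 1 = 0 := by
  have hvanish : EqOn (fun s => psi0 (x - s) y (1 - s)) 0 (uIcc 0 1) := by
    intro s hs
    rw [uIcc_of_le zero_le_one] at hs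
    have : (1 - s) ^ 2 - 2 * (x - s) ^ 2 - 2 * y ^ 2 ≤ 0 := by
      nlinarith [mul_nonneg hs.1 (by linarith : (0:ℝ) ≤ 1 - 2 * x), sq_nonneg s]
    simp [psi0_eq, sqrt_eq_zero'.2 this]
  rw [psiE, intervalIntegral.integral_congr hvanish, Pi.zero_def, intervalIntegral.integral_zero]

/-- `ψ_E` is self-similar, `ψ_E(x,y,t) = ψ_E(x/t,y/t,1)` for `t > 0`, and in the
frozen regions (points of the square `◇ = {|x|+|y|<1}` outside the closed disc of
radius `√2/2`) it equals `1` for `x > 1/2` and `0` for `x < 1/2`. -/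
theorem psiE_self_similar_and_frozen_values :
    (∀ x y t : ℝ, 0 < t → psiE x y t = psiE (x / t) (y / t) 1) ∧
    (∀ x y : ℝ, |x| + |y| < 1 → 1/2 < x ^ 2 + y ^ 2 →
      ((1/2 < x → psiE x y 1 = 1) ∧ (x < 1/2 → psiE x y 1 = 0))) := by
  refine ⟨fun x y t ht => ?_, fun x y hsquare hdisc => ?_⟩
  · simpa [mul_div_cancel₀ _ ht.ne'] using psiE_mul ht (x / t) (y / t) 1
  · exact ⟨fun hx => psiE_eq_one hx.le (by linarith [le_abs_self x]) hdisc.le,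
      fun hx => psiE_eq_zero hx.le hdisc.le⟩
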